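/- For every strictly increasing function f : ℕ → ℕ and all (a_k) ∈ c₀₀, ‖Σ_k a_k e_{f(k)}‖_{T̈} ≥ ‖Σ_k a_k e_k‖_{T̈}, where (e_n) is the unit vector basis. -/

import Mathlib

open Ordinal Filter Topology

namespace LTIndex

/-- `E < F` for finite sets: `max E < min F` (with `max ∅ = 0`, `min ∅ = ∞`),
equivalently every element of `E` is less than every element of `F`. -/
def finLT (E F : Finset ℕ) : Prop := ∀ a ∈ E, ∀ b ∈ F, a < b

/-- `min E` (junk value `0` when `E = ∅`). -/
noncomputable def minOf (E : Finset ℕ) : ℕ := sInf (E : Set ℕ)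

/-- `{E₁, …, E_n}` is `𝓕`-admissible: the `Eᵢ` are nonempty, `E₁ < ⋯ < E_n`
and `{min E₁, …, min E_n} ∈ 𝓕`. -/
def IsAdmissible (𝓕 : Set (Finset ℕ)) (l : List (Finset ℕ)) : Prop :=
  (∀ E ∈ l, E.Nonempty) ∧ l.Chain' finLT ∧ (l.map minOf).toFinset ∈ 𝓕

/-- `𝓜[𝓝]`. -/
def famComp (M N : Set (Finset ℕ)) : Set (Finset ℕ) :=
  {F | ∃ l : List (Finset ℕ), IsAdmissible M l ∧ (∀ E ∈ l, E ∈ N) ∧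
    F = l.foldr (· ∪ ·) ∅}

/-- `(𝓜, 𝓝) = {M ∪ N : M < N, M ∈ 𝓜, N ∈ 𝓝}`. -/
def pairFam (M N : Set (Finset ℕ)) : Set (Finset ℕ) :=
  {F | ∃ A ∈ M, ∃ B ∈ N, finLT A B ∧ F = A ∪ B}

/-- `𝓜² = (𝓜, 𝓜)`. -/
def sqFam (M : Set (Finset ℕ)) : Set (Finset ℕ) := pairFam M M

/-- `S₀ = {{n} : n ∈ ℕ} ∪ {∅}`. -/
def schreierZero : Set (Finset ℕ) := {F : Finset ℕ | F.card ≤ 1}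

/-- `S₁ = {F : |F| ≤ min F}`. -/
noncomputable def schreierOne : Set (Finset ℕ) := {F : Finset ℕ | F.card ≤ minOf F}

/-- A ladder system: for every countable limit ordinal `o`, `seq o` is a strictly
increasing sequence of ordinals below `o` with supremum `o`. -/
def IsCtblLadder (seq : Ordinal.{0} → ℕ → Ordinal.{0}) : Prop :=
  ∀ o : Ordinal, o.card ≤ Cardinal.aleph0 → Order.IsSuccLimit o →
    StrictMono (seq o) ∧ (∀ n : ℕ, seq o n < o) ∧ (⨆ n : ℕ, seq o n) = o

/-- The Schreier classes `S_α`, relative to a choice `seq` of ladders at limit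
ordinals: `S₀` is the singletons together with `∅`, `S_{α+1} = S₁[S_α]`, and at a
limit `α` (with ladder `(α_n) = seq α`), `S_α = {F : F ∈ S_{α_n} for some n ≤ |F|}`. -/
noncomputable def schreier (seq : Ordinal.{0} → ℕ → Ordinal.{0}) (o : Ordinal.{0}) :
    Set (Finset ℕ) :=
  Ordinal.limitRecOn (motive := fun _ => Set (Finset ℕ)) o schreierZero
    (fun _ S => famComp schreierOne S)
    (fun o _ ih => {F | ∃ n : ℕ, n ≤ F.card ∧ ∃ h : seq o n < o, F ∈ ih (seq o n) h})

/-- `σ_F(x) = ∑_{n ∈ F} |x n|`. -/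
noncomputable def sigmaF (F : Finset ℕ) (x : ℕ →₀ ℝ) : ℝ := ∑ n ∈ F, |x n|

/-- `‖x‖_𝓕 = sup_{F ∈ 𝓕} σ_F(x)`. -/
noncomputable def famNorm (𝓕 : Set (Finset ℕ)) (x : ℕ →₀ ℝ) : ℝ :=
  sSup {r : ℝ | ∃ F ∈ 𝓕, r = sigmaF F x}

/-- `E x`: the coordinate restriction of `x` to `E`. -/
noncomputable def restr (E : Finset ℕ) (x : ℕ →₀ ℝ) : ℕ →₀ ℝ :=
  Finsupp.filter (· ∈ E) x

/-- The norms `‖·‖_n` (when `Sadm = S_β`), resp. `‖·‖′_n` (when `Sadm = (S_β)²`):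
`‖·‖₀ = ‖·‖_{S_α}` and
`‖x‖_{n+1} = max{‖x‖_n, sup{(1/2)∑ᵢ ‖Eᵢx‖_n : {E₁,…,E_j} Sadm-admissible}}`. -/
noncomputable def normSeq (Sa Sadm : Set (Finset ℕ)) : ℕ → (ℕ →₀ ℝ) → ℝ
  | 0, x => famNorm Sa x
  | n + 1, x =>
      max (normSeq Sa Sadm n x)
        (sSup {r : ℝ | ∃ l : List (Finset ℕ), IsAdmissible Sadm l ∧
          r = (1 / 2) * ((l.map fun E => normSeq Sa Sadm n (restr E x)).sum)})

/-- `‖x‖_{T̃}` (resp. `‖x‖_{T̈}`): the limit (= supremum, the sequence being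
nondecreasing) of the norms `‖x‖_n` (resp. `‖x‖′_n`). -/
noncomputable def tnorm (Sa Sadm : Set (Finset ℕ)) (x : ℕ →₀ ℝ) : ℝ :=
  ⨆ n : ℕ, normSeq Sa Sadm n x

/-- The families `𝓕_n` (with `Sadm = S_β`), resp. `𝓕′_n` (with `Sadm = (S_β)²`):
`𝓕₀ = S_α`, `𝓕_{n+1} = Sadm[𝓕_n]`. -/
def famF (Sa Sadm : Set (Finset ℕ)) : ℕ → Set (Finset ℕ)
  | 0 => Sa
  | n + 1 => famComp Sadm (famF Sa Sadm n)

/-- The families `𝓖_n` (with `Sadm = S_β`), resp. `𝓖′_n` (with `Sadm = (S_β)²`),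
reindexed: `famG Sadm n = 𝓖_{n+1}`, i.e. `famG Sadm 0 = 𝓖₁ = Sadm` and
`𝓖_{n+2} = Sadm[𝓖_{n+1}]`. -/
def famG (Sadm : Set (Finset ℕ)) : ℕ → Set (Finset ℕ)
  | 0 => Sadm
  | n + 1 => famComp Sadm (famG Sadm n)

/-- Hereditary family. -/
def Hereditary (𝓕 : Set (Finset ℕ)) : Prop := ∀ A ∈ 𝓕, ∀ B ⊆ A, B ∈ 𝓕

/-- Spreading family. -/
def Spreading (𝓕 : Set (Finset ℕ)) : Prop :=
  ∀ A ∈ 𝓕, ∀ g : ℕ → ℕ, StrictMonoOn g (A : Set ℕ) → (∀ a ∈ A, a ≤ g a) →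
    A.image g ∈ 𝓕

/-- Compactness of a family of finite sets, viewed inside `2^ℕ` (ℕ → Bool with the
product topology) via characteristic functions. -/
def CompactFam (𝓕 : Set (Finset ℕ)) : Prop :=
  IsCompact ((fun A : Finset ℕ => fun n : ℕ => decide (n ∈ A)) '' 𝓕)

/-- Regular family: hereditary, spreading and compact. -/
def RegularFam (𝓕 : Set (Finset ℕ)) : Prop :=
  Hereditary 𝓕 ∧ Spreading 𝓕 ∧ CompactFam 𝓕

/-- The Cantor–Bendixson derivative of a family of finite subsets of ℕ: the set of
its limit points in the product topology of `2^ℕ` (a basic neighbourhood of `A` is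
determined by an agreement of initial segments). -/
def famDeriv (𝓕 : Set (Finset ℕ)) : Set (Finset ℕ) :=
  {A | ∀ m : ℕ, ∃ B ∈ 𝓕, B ≠ A ∧ B.filter (· ≤ m) = A.filter (· ≤ m)}

/-- Iterated Cantor–Bendixson derivatives `𝓕^{(o)}`. -/
noncomputable def famDerivIter (𝓕 : Set (Finset ℕ)) (o : Ordinal.{0}) : Set (Finset ℕ) :=
  Ordinal.limitRecOn (motive := fun _ => Set (Finset ℕ)) o 𝓕
    (fun _ S => famDeriv S)
    (fun o _ ih => ⋂ (o' : Ordinal) (h : o' < o), ih o' h)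

/-- One step of the standard representation: `A` is obtained from the remainder `R`
as `R ∩ [1, k]` where `k` is the largest element of `F` with `R ∩ [1, k] ∈ 𝓝`. -/
def stepOf (N : Set (Finset ℕ)) (F R A : Finset ℕ) : Prop :=
  ∃ k ∈ F, A = R.filter (· ≤ k) ∧ A ∈ N ∧
    ∀ k' ∈ F, R.filter (· ≤ k') ∈ N → k' ≤ k

/-- `IsStdRepFrom N F R L`: starting from remainder `R`, the list `L` is produced by
the greedy recursion defining the standard representation, exhausting `R`. -/
def IsStdRepFrom (N : Set (Finset ℕ)) (F : Finset ℕ) : Finset ℕ → List (Finset ℕ) → Prop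
  | R, [] => R = ∅
  | R, A :: L => stepOf N F R A ∧ IsStdRepFrom N F (R \ A) L

/-- `L` is the standard representation of `F` (as an element of `𝓜[𝓝]`). -/
def IsStdRep (N : Set (Finset ℕ)) (F : Finset ℕ) (L : List (Finset ℕ)) : Prop :=
  IsStdRepFrom N F F L

section Trees

variable {X : Type*}

/-- A tree on `X`: a set of nonempty finite sequences closed under nonempty initial
segments. -/
def IsTree (T : Set (List X)) : Prop :=
  ∀ l ∈ T, l ≠ [] ∧ ∀ m : ℕ, 0 < m → m < l.length → l.take m ∈ T

/-- A tree is well-founded if it has no infinite branch. -/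
def WellFoundedTree (T : Set (List X)) : Prop :=
  ¬ ∃ f : ℕ → X, ∀ n : ℕ, (List.ofFn fun i : Fin (n + 1) => f i) ∈ T

/-- The derived tree `D(T)`. -/
def treeDeriv (T : Set (List X)) : Set (List X) :=
  {l | l ∈ T ∧ ∃ x : X, l ++ [x] ∈ T}

/-- Iterated derived trees `D^o(T)`. -/
noncomputable def treeDerivIter (T : Set (List X)) (o : Ordinal.{0}) : Set (List X) :=
  Ordinal.limitRecOn (motive := fun _ => Set (List X)) o T
    (fun _ S => treeDeriv S)
    (fun o _ ih => ⋂ (o' : Ordinal) (h : o' < o), ih o' h)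

/-- The order `o(T)` of a (well-founded) tree. -/
noncomputable def treeOrder (T : Set (List X)) : Ordinal.{0} :=
  sInf {o : Ordinal | treeDerivIter T o = ∅}

end Trees

section Banach

variable (X : Type) [NormedAddCommGroup X] [NormedSpace ℝ X]

/-- `cs` witnesses that the node `l` is a finite block basis of `(e_i)`: each entry
of `l` is the (finite, nonzero) linear combination of the `e_i` given by the
corresponding entry of `cs`, and the supports are successive. -/
def IsBlockNode (e : ℕ → X) (l : List X) (cs : List (ℕ →₀ ℝ)) : Prop :=
  cs.length = l.length ∧
  (∀ (i : ℕ) (h : i < cs.length) (h' : i < l.length),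
    l.get ⟨i, h'⟩ = (cs.get ⟨i, h⟩).sum fun n r => r • e n) ∧
  (∀ c ∈ cs, c ≠ 0) ∧
  cs.Chain' fun c d => finLT c.support d.support

/-- `e` is a (Schauder) basis of `X`. -/
def IsSchauderBasis (e : ℕ → X) : Prop :=
  ∀ x : X, ∃! a : ℕ → ℝ,
    Tendsto (fun n => ∑ i ∈ Finset.range n, a i • e i) atTop (𝓝 x)

/-- An `ℓ¹`-`K` tree on `X`: a tree on the unit sphere of `X` such that every node
`(x₁, …, x_n)` satisfies `‖∑ aᵢ xᵢ‖ ≥ K⁻¹ ∑ |aᵢ|`. -/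
def IsL1Tree (K : ℝ) (T : Set (List X)) : Prop :=
  IsTree T ∧ ∀ l ∈ T, (∀ x ∈ l, ‖x‖ = 1) ∧
    ∀ a : Fin l.length → ℝ, K⁻¹ * ∑ i, |a i| ≤ ‖∑ i : Fin l.length, a i • l.get i‖

/-- `I(X, K)`: the supremum of the orders of well-founded `ℓ¹`-`K` trees on `X`. -/
noncomputable def bourgainIndexK (K : ℝ) : Ordinal.{0} :=
  ⨆ T : {T : Set (List X) // IsL1Tree X K T ∧ WellFoundedTree T}, treeOrder T.1

/-- The Bourgain `ℓ¹`-index `I(X) = sup_{1 ≤ K < ∞} I(X, K)`. -/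
noncomputable def bourgainIndex : Ordinal.{0} :=
  ⨆ K : {K : ℝ // 1 ≤ K}, bourgainIndexK X K.1

/-- `I_b(X, K)` relative to the basis `e`: the supremum of the orders of
well-founded `ℓ¹`-`K` block trees on `X`. -/
noncomputable def blockIndexK (e : ℕ → X) (K : ℝ) : Ordinal.{0} :=
  ⨆ T : {T : Set (List X) //
      IsL1Tree X K T ∧ (∀ l ∈ T, ∃ cs, IsBlockNode X e l cs) ∧ WellFoundedTree T},
    treeOrder T.1

/-- The block `ℓ¹`-index `I_b(X) = sup_{1 ≤ K < ∞} I_b(X, K)`. -/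
noncomputable def blockIndex (e : ℕ → X) : Ordinal.{0} :=
  ⨆ K : {K : ℝ // 1 ≤ K}, blockIndexK X e K.1

end Banach

end LTIndex

/-!
A strictly increasing `f` keeps the cardinality of a finite set and does not decrease its
minimum, so `F ↦ f(F)` maps `S₁`, hence by transfinite induction every Schreier family, and
then `(S_β)²` and admissible sequences, into themselves. Every quantity entering `‖x‖′_n` is
therefore matched by an equal one for the spread vector, and `‖x‖′_n` can only grow under
spreading, by induction on `n`. All `‖·‖′_n` are bounded by the `ℓ¹` norm, so the suprema are
finite and the comparison passes to `‖·‖_{T̈}`.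
-/

lemma Real.sSup_le_sSup_of_forall_exists_le {s t : Set ℝ} (ht : BddAbove t)
    (ht₀ : ∀ y ∈ t, 0 ≤ y) (h : ∀ x ∈ s, ∃ y ∈ t, x ≤ y) : sSup s ≤ sSup t :=
  Real.sSup_le (fun x hx => let ⟨_, hy, hxy⟩ := h x hx; hxy.trans (le_csSup ht hy))
    (Real.sSup_nonneg ht₀)

namespace LTIndex

noncomputable def l1Norm (x : ℕ →₀ ℝ) : ℝ := ∑ i ∈ x.support, |x i|

lemma finLT.disjoint {E F : Finset ℕ} (h : finLT E F) : Disjoint E F :=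
  Finset.disjoint_left.mpr fun {a} ha haF => (h a ha a haF).ne rfl

-- `finLT` is transitive only through a nonempty middle set.
lemma IsAdmissible.pairwise_disjoint {M : Set (Finset ℕ)} {l : List (Finset ℕ)}
    (h : IsAdmissible M l) : l.Pairwise Disjoint := by
  obtain ⟨hne, hchain, -⟩ := h
  let R : Finset ℕ → Finset ℕ → Prop := fun E F => E.Nonempty ∧ finLT E F
  have : Trans R R R := ⟨fun ⟨hE, hEF⟩ ⟨⟨b, hb⟩, hFG⟩ =>
    ⟨hE, fun a ha c hc => (hEF a ha b hb).trans (hFG b hb c hc)⟩⟩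
  exact ((hchain.imp_of_mem_imp fun E _ hE _ hEF => (⟨hne E hE, hEF⟩ : R _ _)).pairwise).imp
    fun h => h.2.disjoint

lemma sigmaF_nonneg (F : Finset ℕ) (x : ℕ →₀ ℝ) : 0 ≤ sigmaF F x :=
  Finset.sum_nonneg fun _ _ => abs_nonneg _

lemma sigmaF_le_l1Norm (F : Finset ℕ) (x : ℕ →₀ ℝ) : sigmaF F x ≤ l1Norm x :=
  calc ∑ n ∈ F, |x n| = ∑ n ∈ F ∩ x.support, |x n| :=
        (Finset.sum_subset Finset.inter_subset_left fun n hn hn' => by simp_all).symm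
    _ ≤ ∑ n ∈ x.support, |x n| :=
        Finset.sum_le_sum_of_subset_of_nonneg Finset.inter_subset_right
          fun _ _ _ => abs_nonneg _

lemma l1Norm_nonneg (x : ℕ →₀ ℝ) : 0 ≤ l1Norm x := sigmaF_nonneg _ x

lemma l1Norm_restr (E : Finset ℕ) (x : ℕ →₀ ℝ) :
    l1Norm (restr E x) = sigmaF (x.support.filter (· ∈ E)) x :=
  Finset.sum_congr rfl fun _ hi => by
    rw [restr, Finsupp.filter_apply_pos _ _ (Finset.mem_filter.mp hi).2]

lemma sum_sigmaF_le_of_pairwise_disjoint (x : ℕ →₀ ℝ) :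
    ∀ {l : List (Finset ℕ)} {S : Finset ℕ}, l.Pairwise Disjoint → (∀ E ∈ l, E ⊆ S) →
      (l.map (sigmaF · x)).sum ≤ sigmaF S x
  | [], S, _, _ => by simpa using sigmaF_nonneg S x
  | E :: l, S, hl, hS => by
    rw [List.pairwise_cons] at hl
    have htail : (l.map (sigmaF · x)).sum ≤ sigmaF (S \ E) x :=
      sum_sigmaF_le_of_pairwise_disjoint x hl.2 fun F hF =>
        Finset.subset_sdiff.mpr ⟨hS F (.tail _ hF), (hl.1 F hF).symm⟩
    have hsplit := Finset.sum_sdiff (f := fun n => |x n|) (hS E List.mem_cons_self)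
    rw [List.map_cons, List.sum_cons]
    unfold sigmaF at htail ⊢
    linarith

lemma IsAdmissible.sum_map_restr_le {M : Set (Finset ℕ)} {l : List (Finset ℕ)}
    (hl : IsAdmissible M l) {g : (ℕ →₀ ℝ) → ℝ} (hg : ∀ y, g y ≤ l1Norm y) (x : ℕ →₀ ℝ) :
    (l.map fun E => g (restr E x)).sum ≤ l1Norm x :=
  calc (l.map fun E => g (restr E x)).sum
      ≤ (l.map fun E => l1Norm (restr E x)).sum := List.sum_le_sum fun E _ => hg _
    _ = ((l.map fun E => x.support.filter (· ∈ E)).map (sigmaF · x)).sum := by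
        simp only [List.map_map, Function.comp_def, l1Norm_restr]
    _ ≤ sigmaF x.support x :=
        sum_sigmaF_le_of_pairwise_disjoint x
          (hl.pairwise_disjoint.map _ fun _ _ h => Finset.disjoint_filter.mpr
            fun _ _ hE hF => Finset.disjoint_left.mp h hE hF)
          (by simp [Finset.filter_subset])

section NormBounds

variable (Sa Sadm : Set (Finset ℕ))

lemma normSeq_nonneg : ∀ (n : ℕ) (x : ℕ →₀ ℝ), 0 ≤ normSeq Sa Sadm n x
  | 0, _ => Real.sSup_nonneg <| by rintro _ ⟨F, -, rfl⟩; exact sigmaF_nonneg F _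
  | n + 1, x => le_max_of_le_left (normSeq_nonneg n x)

lemma normSeq_le_l1Norm : ∀ (n : ℕ) (x : ℕ →₀ ℝ), normSeq Sa Sadm n x ≤ l1Norm x
  | 0, x => Real.sSup_le (by rintro _ ⟨F, -, rfl⟩; exact sigmaF_le_l1Norm F x) (l1Norm_nonneg x)
  | n + 1, x => max_le (normSeq_le_l1Norm n x) <| Real.sSup_le
      (by
        rintro _ ⟨l, hl, rfl⟩
        linarith [hl.sum_map_restr_le (normSeq_le_l1Norm n) x, l1Norm_nonneg x])
      (l1Norm_nonneg x)

end NormBounds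

section Spreading

variable {f : ℕ → ℕ}

lemma finLT_image (hf : StrictMono f) {E F : Finset ℕ} (h : finLT E F) :
    finLT (E.image f) (F.image f) := by
  simp only [finLT, Finset.forall_mem_image]
  exact fun a ha b hb => hf (h a ha b hb)

lemma minOf_image (hf : StrictMono f) {E : Finset ℕ} (hE : E.Nonempty) :
    minOf (E.image f) = f (minOf E) := by
  rw [minOf, minOf, hE.csInf_eq_min', (hE.image f).csInf_eq_min',
    Finset.min'_image hf.monotone]

lemma IsAdmissible.map_image (hf : StrictMono f) {M : Set (Finset ℕ)}
    (hM : Set.MapsTo (Finset.image f) M M) {l : List (Finset ℕ)} (h : IsAdmissible M l) :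
    IsAdmissible M (l.map (Finset.image f)) := by
  obtain ⟨hne, hchain, hmin⟩ := h
  refine ⟨?_, (List.isChain_map _).mpr (hchain.imp fun _ _ => finLT_image hf), ?_⟩
  · simpa using fun E hE => (hne E hE).image f
  · have : (l.map (Finset.image f)).map minOf = (l.map minOf).map f := by
      simp only [List.map_map]
      exact List.map_congr_left fun E hE => minOf_image hf (hne E hE)
    have htoFinset : ((l.map minOf).map f).toFinset = (l.map minOf).toFinset.image f := by
      ext; simp
    rw [this, htoFinset]
    exact hM hmin

lemma foldr_union_map_image (l : List (Finset ℕ)) :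
    (l.map (Finset.image f)).foldr (· ∪ ·) ∅ = (l.foldr (· ∪ ·) ∅).image f := by
  induction l with
  | nil => simp
  | cons E l ih => simp [ih, Finset.image_union]

lemma mapsTo_image_famComp (hf : StrictMono f) {M N : Set (Finset ℕ)}
    (hM : Set.MapsTo (Finset.image f) M M) (hN : Set.MapsTo (Finset.image f) N N) :
    Set.MapsTo (Finset.image f) (famComp M N) (famComp M N) := by
  rintro _ ⟨l, hl, hlN, rfl⟩
  exact ⟨l.map (Finset.image f), hl.map_image hf hM, by simpa using fun E hE => hN (hlN E hE),
    (foldr_union_map_image l).symm⟩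

lemma mapsTo_image_pairFam (hf : StrictMono f) {M N : Set (Finset ℕ)}
    (hM : Set.MapsTo (Finset.image f) M M) (hN : Set.MapsTo (Finset.image f) N N) :
    Set.MapsTo (Finset.image f) (pairFam M N) (pairFam M N) := by
  rintro _ ⟨A, hA, B, hB, hAB, rfl⟩
  exact ⟨A.image f, hM hA, B.image f, hN hB, finLT_image hf hAB, Finset.image_union A B⟩

lemma mapsTo_image_schreierOne (hf : StrictMono f) :
    Set.MapsTo (Finset.image f) schreierOne schreierOne := by
  intro F (hF : F.card ≤ minOf F)
  show (F.image f).card ≤ minOf (F.image f)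
  rcases F.eq_empty_or_nonempty with rfl | hne
  · simp
  · rw [minOf_image hf hne]
    exact Finset.card_image_le.trans (hF.trans hf.le_apply)

lemma mapsTo_image_schreier (seq : Ordinal → ℕ → Ordinal) (hf : StrictMono f) (o : Ordinal) :
    Set.MapsTo (Finset.image f) (schreier seq o) (schreier seq o) := by
  induction o using Ordinal.limitRecOn with
  | zero =>
    rw [schreier, Ordinal.limitRecOn_zero]
    exact fun F (hF : F.card ≤ 1) => Finset.card_image_le.trans hF
  | add_one o ih =>
    rw [schreier, Ordinal.limitRecOn_add_one]
    exact mapsTo_image_famComp hf (mapsTo_image_schreierOne hf) ih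
  | limit o ho ih =>
    rw [schreier, Ordinal.limitRecOn_limit _ _ _ _ ho]
    rintro F ⟨n, hn, hlt, hF⟩
    exact ⟨n, by rwa [Finset.card_image_of_injective F hf.injective], hlt, ih _ hlt hF⟩

end Spreading

section EmbDomain

variable {f : ℕ → ℕ} (hf : Function.Injective f)

lemma restr_image_embDomain (E : Finset ℕ) (x : ℕ →₀ ℝ) :
    restr (E.image f) (Finsupp.embDomain ⟨f, hf⟩ x) =
      Finsupp.embDomain ⟨f, hf⟩ (restr E x) := by
  ext m
  by_cases hm : m ∈ Set.range (⟨f, hf⟩ : ℕ ↪ ℕ)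
  · obtain ⟨n, rfl⟩ := hm
    simp only [restr, Finsupp.filter_apply, Finsupp.embDomain_apply_self]
    simp [hf.eq_iff]
  · simp [restr, Finsupp.filter_apply, Finsupp.embDomain_of_notMem_range _ _ _ hm]

lemma sigmaF_image_embDomain (F : Finset ℕ) (x : ℕ →₀ ℝ) :
    sigmaF (F.image f) (Finsupp.embDomain ⟨f, hf⟩ x) = sigmaF F x := by
  rw [sigmaF, Finset.sum_image fun a _ b _ h => hf h]
  exact Finset.sum_congr rfl fun n _ => congrArg abs (Finsupp.embDomain_apply_self ⟨f, hf⟩ x n)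

end EmbDomain

lemma normSeq_le_normSeq_embDomain {Sa Sadm : Set (Finset ℕ)} {f : ℕ → ℕ} (hf : StrictMono f)
    (hSa : Set.MapsTo (Finset.image f) Sa Sa) (hSadm : Set.MapsTo (Finset.image f) Sadm Sadm) :
    ∀ (n : ℕ) (x : ℕ →₀ ℝ),
      normSeq Sa Sadm n x ≤ normSeq Sa Sadm n (Finsupp.embDomain ⟨f, hf.injective⟩ x)
  | 0, x => by
    refine Real.sSup_le_sSup_of_forall_exists_le ?_ ?_ ?_
    · exact ⟨_, by rintro _ ⟨F, -, rfl⟩; exact sigmaF_le_l1Norm F _⟩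
    · rintro _ ⟨F, -, rfl⟩; exact sigmaF_nonneg F _
    · rintro _ ⟨F, hF, rfl⟩
      exact ⟨_, ⟨F.image f, hSa hF, rfl⟩, (sigmaF_image_embDomain hf.injective F x).ge⟩
  | n + 1, x => by
    refine max_le_max (normSeq_le_normSeq_embDomain hf hSa hSadm n x) ?_
    set y := Finsupp.embDomain ⟨f, hf.injective⟩ x
    refine Real.sSup_le_sSup_of_forall_exists_le ⟨l1Norm y, ?_⟩ ?_ ?_
    · rintro _ ⟨l, hl, rfl⟩
      linarith [hl.sum_map_restr_le (normSeq_le_l1Norm Sa Sadm n) y, l1Norm_nonneg y]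
    · rintro _ ⟨l, -, rfl⟩
      exact mul_nonneg (by norm_num) <| List.sum_nonneg <| by
        simpa using fun _ _ => normSeq_nonneg _ _ _ _
    · rintro _ ⟨l, hl, rfl⟩
      refine ⟨_, ⟨l.map (Finset.image f), hl.map_image hf hSadm, rfl⟩, ?_⟩
      rw [List.map_map]
      refine mul_le_mul_of_nonneg_left (List.sum_le_sum fun E _ => ?_) (by norm_num)
      simp only [Function.comp_apply, y, restr_image_embDomain hf.injective]
      exact normSeq_le_normSeq_embDomain hf hSa hSadm n _

theorem statement15_general (seq : Ordinal → ℕ → Ordinal)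
    (a b : Ordinal) (f : ℕ → ℕ) (hf : StrictMono f) (c : ℕ →₀ ℝ) :
    tnorm (schreier seq a) (sqFam (schreier seq b)) c ≤
      tnorm (schreier seq a) (sqFam (schreier seq b))
        (Finsupp.embDomain ⟨f, hf.injective⟩ c) := by
  have hSb := mapsTo_image_schreier seq hf b
  have hle := normSeq_le_normSeq_embDomain hf (mapsTo_image_schreier seq hf a)
    (mapsTo_image_pairFam hf hSb hSb)
  have hbdd : BddAbove (Set.range fun n => normSeq (schreier seq a) (sqFam (schreier seq b)) n
      (Finsupp.embDomain ⟨f, hf.injective⟩ c)) :=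
    ⟨_, Set.forall_mem_range.mpr fun n => normSeq_le_l1Norm _ _ n _⟩
  exact ciSup_le fun n => (hle n c).trans (le_ciSup hbdd n)

/-- for a strictly increasing `f : ℕ → ℕ` and `(a_k) ∈ c₀₀`,
`‖∑ a_k e_{f(k)}‖_{T̈} ≥ ‖∑ a_k e_k‖_{T̈}`. -/
theorem statement15 (seq : Ordinal → ℕ → Ordinal) (hseq : IsCtblLadder seq)
    (a b : Ordinal) (ha : a.card ≤ Cardinal.aleph0) (hb : b.card ≤ Cardinal.aleph0)
    (hb0 : b ≠ 0) (f : ℕ → ℕ) (hf : StrictMono f) (c : ℕ →₀ ℝ) :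
    tnorm (schreier seq a) (sqFam (schreier seq b)) c ≤
      tnorm (schreier seq a) (sqFam (schreier seq b))
        (Finsupp.embDomain ⟨f, hf.injective⟩ c) :=
  statement15_general seq a b f hf c

end LTIndex
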